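/- arXiv:2310.16442 — 3 statements merged into one kernel-verified Lean document; each statement's English description precedes it below -/
import Mathlib

section
/- For any n×n real matrix A and symmetric positive definite C, if z is a least squares solution of A C Aᵀ z = b, then x = C Aᵀ z is a least squares solution of A x = b. -/
open Matrix

noncomputable def e2norm {n : ℕ} (v : Fin n → ℝ) : ℝ := ‖(WithLp.equiv 2 (Fin n → ℝ)).symm v‖

/-!
Since `C` is positive definite, `A C Aᴴ x = 0` forces `xᴴ A C Aᴴ x = 0` and hence `Aᴴ x = 0`, so
`A C Aᴴ` and `Aᴴ` have the same kernel. By rank–nullity `A C Aᴴ` then has the rank of `A`, and as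
its column space is contained in that of `A`, the two column spaces coincide. Hence `A x` ranges
over the same vectors as `A C Aᴴ w`, and `A (C Aᴴ z) = A C Aᴴ z` is optimal among them.
-/

namespace Matrix

variable {m n R : Type*} [Fintype m] [Fintype n]

theorem ker_mulVecLin_mul_mul_conjTranspose [CommRing R] [PartialOrder R] [StarRing R]
    {C : Matrix n n R} (hC : C.PosDef) (A : Matrix m n R) :
    LinearMap.ker (A * C * Aᴴ).mulVecLin = LinearMap.ker Aᴴ.mulVecLin := by
  ext x
  simp only [LinearMap.mem_ker, mulVecLin_apply]
  refine ⟨fun h => ?_, fun h => by rw [← mulVec_mulVec, h, mulVec_zero]⟩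
  by_contra hne
  have hquad : star x ⬝ᵥ ((A * C * Aᴴ) *ᵥ x) = star (Aᴴ *ᵥ x) ⬝ᵥ (C *ᵥ (Aᴴ *ᵥ x)) := by
    rw [star_mulVec, conjTranspose_conjTranspose, ← dotProduct_mulVec, mulVec_mulVec,
      mulVec_mulVec, Matrix.mul_assoc]
  exact (hC.dotProduct_mulVec_pos hne).ne' (by rw [← hquad, h, dotProduct_zero])

variable [Field R] [PartialOrder R] [StarRing R] [StarOrderedRing R]

theorem rank_mul_mul_conjTranspose {C : Matrix n n R} (hC : C.PosDef) (A : Matrix m n R) :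
    (A * C * Aᴴ).rank = A.rank := by
  rw [← rank_conjTranspose A]
  refine add_right_cancel (b := Module.finrank R (LinearMap.ker Aᴴ.mulVecLin)) ?_
  rw [rank, rank, LinearMap.finrank_range_add_finrank_ker, ← ker_mulVecLin_mul_mul_conjTranspose hC,
    LinearMap.finrank_range_add_finrank_ker]

theorem range_mulVecLin_mul_mul_conjTranspose {C : Matrix n n R} (hC : C.PosDef)
    (A : Matrix m n R) :
    LinearMap.range (A * C * Aᴴ).mulVecLin = LinearMap.range A.mulVecLin := by
  refine Submodule.eq_of_le_of_finrank_eq ?_ (rank_mul_mul_conjTranspose hC A)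
  rintro _ ⟨v, rfl⟩
  exact ⟨(C * Aᴴ) *ᵥ v, by simp only [mulVecLin_apply, mulVec_mulVec, Matrix.mul_assoc]⟩

end Matrix

theorem ACAT_lsq_gives_lsq {n : ℕ} (A C : Matrix (Fin n) (Fin n) ℝ) (hC : C.PosDef)
    (b z : Fin n → ℝ)
    (hz : ∀ w : Fin n → ℝ,
      e2norm (b - (A * C * Aᵀ).mulVec z) ≤ e2norm (b - (A * C * Aᵀ).mulVec w)) :
    ∀ x : Fin n → ℝ, e2norm (b - A.mulVec ((C * Aᵀ).mulVec z)) ≤ e2norm (b - A.mulVec x) := by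
  intro x
  obtain ⟨w, hw⟩ : A *ᵥ x ∈ LinearMap.range (A * C * Aᵀ).mulVecLin := by
    rw [← conjTranspose_eq_transpose_of_trivial, range_mulVecLin_mul_mul_conjTranspose hC]
    exact ⟨x, rfl⟩
  rw [mulVec_mulVec, ← Matrix.mul_assoc, ← show (A * C * Aᵀ) *ᵥ w = A *ᵥ x from hw]
  exact hz w
end

section
/- Suppose A ∈ R^{n×n} has rank r with largest singular value σ₁(A) and smallest nonzero singular value σ_r(A), let σ₁, σ_r be the extreme nonzero singular values of A C^{1/2}, and let r_k be residuals satisfying ‖(r_k)|_{R(A)}‖₂ ≤ 2((σ₁−σ_r)/(σ₁+σ_r))^k ‖(r₀)|_{R(A)}‖₂, where (v)|_{R(A)} denotes the orthogonal projection of v onto R(A). Then ‖Aᵀ r_k‖₂ ≤ 2 κ(A) ((σ₁−σ_r)/(σ₁+σ_r))^k ‖Aᵀ r₀‖₂, where κ(A) = σ₁(A)/σ_r(A). -/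
open Matrix
open scoped RealInnerProductSpace

def IsSingularValue {n : ℕ} (A : Matrix (Fin n) (Fin n) ℝ) (σ : ℝ) : Prop :=
  0 ≤ σ ∧ ∃ v : Fin n → ℝ, v ≠ 0 ∧ (Aᵀ * A).mulVec v = (σ ^ 2) • v

namespace ATrAux

variable {n : ℕ}

lemma inner_symm_eq_dot (x y : Fin n → ℝ) :
    ⟪(WithLp.equiv 2 (Fin n → ℝ)).symm x, (WithLp.equiv 2 (Fin n → ℝ)).symm y⟫ = x ⬝ᵥ y := by
  simp [PiLp.inner_apply, RCLike.inner_apply, dotProduct, mul_comm]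

lemma dot_self_nonneg (x : Fin n → ℝ) : 0 ≤ x ⬝ᵥ x :=
  Finset.sum_nonneg fun i _ => mul_self_nonneg _

lemma dot_self_eq_zero {x : Fin n → ℝ} (h : x ⬝ᵥ x = 0) : x = 0 := by
  funext i
  have h2 := (Finset.sum_eq_zero_iff_of_nonneg
    (fun i _ => mul_self_nonneg (x i))).mp h i (Finset.mem_univ i)
  exact mul_self_eq_zero.mp h2

lemma e2norm_eq (v : Fin n → ℝ) : e2norm v = Real.sqrt (v ⬝ᵥ v) := by
  rw [e2norm, EuclideanSpace.norm_eq]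
  congr 1
  simp [dotProduct, sq]

lemma e2norm_nonneg (v : Fin n → ℝ) : 0 ≤ e2norm v := norm_nonneg _

/-- Key spectral bounds: `‖Aᵀ w‖ ≤ σ1A ‖w‖` and `σrA ‖v‖ ≤ ‖Aᵀ v‖` on `range A`. -/
lemma sv_bounds (A : Matrix (Fin n) (Fin n) ℝ) (σ1A σrA : ℝ)
    (hσ1Anonneg : 0 ≤ σ1A)
    (hσ1Amax : ∀ σ : ℝ, IsSingularValue A σ → σ ≤ σ1A)
    (hσrApos : 0 < σrA)
    (hσrAmin : ∀ σ : ℝ, IsSingularValue A σ → σ ≠ 0 → σrA ≤ σ) :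
    (∀ w : Fin n → ℝ, e2norm (Aᵀ.mulVec w) ≤ σ1A * e2norm w) ∧
    (∀ v ∈ LinearMap.range A.mulVecLin, σrA * e2norm v ≤ e2norm (Aᵀ.mulVec v)) := by
  have hN : (A * Aᵀ).IsHermitian := by
    have h := Matrix.isHermitian_mul_conjTranspose_self A
    rwa [Matrix.conjTranspose_eq_transpose_of_trivial] at h
  have hNsymm : (A * Aᵀ)ᵀ = A * Aᵀ := by
    have h := hN
    rwa [Matrix.IsHermitian, Matrix.conjTranspose_eq_transpose_of_trivial] at h
  set μ : Fin n → ℝ := hN.eigenvalues with hμ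
  -- plain-vector versions of the eigenvectors
  set bv : Fin n → (Fin n → ℝ) := fun i => (hN.eigenvectorBasis i : Fin n → ℝ) with hbv
  have hmv : ∀ i, (A * Aᵀ).mulVec (bv i) = μ i • bv i := fun i => hN.mulVec_eigenvectorBasis i
  -- quadratic form as a dot product
  have hquad : ∀ w : Fin n → ℝ, w ⬝ᵥ (A * Aᵀ).mulVec w = (Aᵀ.mulVec w) ⬝ᵥ (Aᵀ.mulVec w) := by
    intro w
    rw [← Matrix.mulVec_mulVec, Matrix.dotProduct_mulVec, ← Matrix.mulVec_transpose]
  -- normalized eigenvectors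
  have hbb : ∀ i, bv i ⬝ᵥ bv i = 1 := by
    intro i
    have h1 : ‖hN.eigenvectorBasis i‖ = 1 := hN.eigenvectorBasis.orthonormal.1 i
    have h2 : ⟪hN.eigenvectorBasis i, hN.eigenvectorBasis i⟫ = 1 := by
      rw [real_inner_self_eq_norm_sq, h1]; norm_num
    simp only [PiLp.inner_apply, RCLike.inner_apply, starRingEnd_apply, star_trivial] at h2
    exact h2
  have hquad_b : ∀ i, bv i ⬝ᵥ (A * Aᵀ).mulVec (bv i) = μ i := by
    intro i
    rw [hmv i, dotProduct_smul, hbb i, smul_eq_mul, mul_one]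
  -- eigenvalues are nonnegative
  have hμnonneg : ∀ i, 0 ≤ μ i := by
    intro i
    have h := hquad (bv i)
    rw [hquad_b i] at h
    rw [h]; exact dot_self_nonneg _
  -- nonzero eigenvalues give singular values of A
  have hsv : ∀ i, μ i ≠ 0 → IsSingularValue A (Real.sqrt (μ i)) := by
    intro i hi
    refine ⟨Real.sqrt_nonneg _, Aᵀ.mulVec (bv i), ?_, ?_⟩
    · intro h0
      have h2 := hquad (bv i)
      rw [hquad_b i, h0] at h2
      simp at h2
      exact hi h2
    · rw [Real.sq_sqrt (hμnonneg i)]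
      calc (Aᵀ * A).mulVec (Aᵀ.mulVec (bv i))
          = Aᵀ.mulVec ((A * Aᵀ).mulVec (bv i)) := by
            rw [Matrix.mulVec_mulVec, Matrix.mulVec_mulVec, Matrix.mul_assoc]
        _ = μ i • Aᵀ.mulVec (bv i) := by rw [hmv i, Matrix.mulVec_smul]
  have hμub : ∀ i, μ i ≤ σ1A ^ 2 := by
    intro i
    by_cases hi : μ i = 0
    · rw [hi]; positivity
    · have h := hσ1Amax _ (hsv i hi)
      have h2 := Real.sq_sqrt (hμnonneg i)
      nlinarith [Real.sqrt_nonneg (μ i)]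
  have hμlb : ∀ i, μ i ≠ 0 → σrA ^ 2 ≤ μ i := by
    intro i hi
    have hne : Real.sqrt (μ i) ≠ 0 :=
      Real.sqrt_ne_zero'.mpr (lt_of_le_of_ne (hμnonneg i) (Ne.symm hi))
    have h := hσrAmin _ (hsv i hi) hne
    have h2 := Real.sq_sqrt (hμnonneg i)
    nlinarith
  -- spectral expansion of the quadratic form
  have key : ∀ w : Fin n → ℝ,
      w ⬝ᵥ (A * Aᵀ).mulVec w = ∑ i, μ i * (bv i ⬝ᵥ w) ^ 2 ∧
      w ⬝ᵥ w = ∑ i, (bv i ⬝ᵥ w) ^ 2 := by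
    intro w
    have hc : ∀ i, hN.eigenvectorBasis.repr ((WithLp.equiv 2 (Fin n → ℝ)).symm w) i
        = bv i ⬝ᵥ w := by
      intro i
      rw [hN.eigenvectorBasis.repr_apply_apply]
      simp [PiLp.inner_apply, RCLike.inner_apply, dotProduct, mul_comm]
      rfl
    have hcN : ∀ i,
        hN.eigenvectorBasis.repr ((WithLp.equiv 2 (Fin n → ℝ)).symm ((A * Aᵀ).mulVec w)) i
        = μ i * (bv i ⬝ᵥ w) := by
      intro i
      rw [hN.eigenvectorBasis.repr_apply_apply]
      have h1 : ⟪hN.eigenvectorBasis i, (WithLp.equiv 2 (Fin n → ℝ)).symm ((A * Aᵀ).mulVec w)⟫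
          = bv i ⬝ᵥ (A * Aᵀ).mulVec w := by
        simp [PiLp.inner_apply, RCLike.inner_apply, dotProduct, mul_comm]
        rfl
      rw [h1, Matrix.dotProduct_mulVec, ← Matrix.mulVec_transpose, hNsymm, hmv i,
        smul_dotProduct]
      simp [smul_eq_mul]
    have hinner1 : w ⬝ᵥ (A * Aᵀ).mulVec w =
        ⟪(WithLp.equiv 2 (Fin n → ℝ)).symm w,
         (WithLp.equiv 2 (Fin n → ℝ)).symm ((A * Aᵀ).mulVec w)⟫ := (inner_symm_eq_dot _ _).symm
    have hinner2 : w ⬝ᵥ w =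
        ⟪(WithLp.equiv 2 (Fin n → ℝ)).symm w,
         (WithLp.equiv 2 (Fin n → ℝ)).symm w⟫ := (inner_symm_eq_dot _ _).symm
    constructor
    · rw [hinner1, ← hN.eigenvectorBasis.repr.inner_map_map]
      simp only [PiLp.inner_apply, RCLike.inner_apply, starRingEnd_apply, star_trivial]
      refine Finset.sum_congr rfl fun i _ => ?_
      rw [hc i, hcN i]; ring
    · rw [hinner2, ← hN.eigenvectorBasis.repr.inner_map_map]
      simp only [PiLp.inner_apply, RCLike.inner_apply, starRingEnd_apply, star_trivial]
      refine Finset.sum_congr rfl fun i _ => ?_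
      rw [hc i]; ring
  constructor
  · -- upper bound
    intro w
    obtain ⟨k1, k2⟩ := key w
    have hle : (Aᵀ.mulVec w) ⬝ᵥ (Aᵀ.mulVec w) ≤ σ1A ^ 2 * (w ⬝ᵥ w) := by
      rw [← hquad w, k1, k2, Finset.mul_sum]
      refine Finset.sum_le_sum fun i _ => ?_
      exact mul_le_mul_of_nonneg_right (hμub i) (sq_nonneg _)
    rw [e2norm_eq, e2norm_eq]
    calc Real.sqrt ((Aᵀ.mulVec w) ⬝ᵥ (Aᵀ.mulVec w))
        ≤ Real.sqrt (σ1A ^ 2 * (w ⬝ᵥ w)) := Real.sqrt_le_sqrt hle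
      _ = σ1A * Real.sqrt (w ⬝ᵥ w) := by
          rw [Real.sqrt_mul (sq_nonneg _), Real.sqrt_sq hσ1Anonneg]
  · -- lower bound on the range of A
    rintro v ⟨u, rfl⟩
    have hvdef : A.mulVecLin u = A.mulVec u := rfl
    rw [hvdef]
    obtain ⟨k1, k2⟩ := key (A.mulVec u)
    have hzero : ∀ i, μ i = 0 → bv i ⬝ᵥ A.mulVec u = 0 := by
      intro i hi
      have h2 := hquad (bv i)
      rw [hquad_b i, hi] at h2
      have h3 : Aᵀ.mulVec (bv i) = 0 := dot_self_eq_zero h2.symm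
      rw [Matrix.dotProduct_mulVec, ← Matrix.mulVec_transpose, h3, zero_dotProduct]
    have hge : σrA ^ 2 * (A.mulVec u ⬝ᵥ A.mulVec u) ≤
        (Aᵀ.mulVec (A.mulVec u)) ⬝ᵥ (Aᵀ.mulVec (A.mulVec u)) := by
      rw [← hquad, k1, k2, Finset.mul_sum]
      refine Finset.sum_le_sum fun i _ => ?_
      by_cases hi : μ i = 0
      · rw [hzero i hi, hi]; simp
      · exact mul_le_mul_of_nonneg_right (hμlb i hi) (sq_nonneg _)
    rw [e2norm_eq, e2norm_eq]
    calc σrA * Real.sqrt (A.mulVec u ⬝ᵥ A.mulVec u)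
        = Real.sqrt (σrA ^ 2 * (A.mulVec u ⬝ᵥ A.mulVec u)) := by
          rw [Real.sqrt_mul (sq_nonneg _), Real.sqrt_sq hσrApos.le]
      _ ≤ _ := Real.sqrt_le_sqrt hge

end ATrAux

open ATrAux

theorem ATr_convergence_bound {n : ℕ} (A C S : Matrix (Fin n) (Fin n) ℝ)
    (hC : C.PosDef) (hS : S.PosDef) (hSsq : S * S = C)
    (σ1 σr σ1A σrA : ℝ)
    -- σ1 is the largest singular value of A * C^{1/2}
    (hσ1 : IsSingularValue (A * S) σ1)
    (hσ1max : ∀ σ : ℝ, IsSingularValue (A * S) σ → σ ≤ σ1)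
    -- σr is the smallest nonzero singular value of A * C^{1/2}
    (hσr : IsSingularValue (A * S) σr) (hσrpos : 0 < σr)
    (hσrmin : ∀ σ : ℝ, IsSingularValue (A * S) σ → σ ≠ 0 → σr ≤ σ)
    -- σ1A, σrA are the largest and smallest nonzero singular values of A
    (hσ1A : IsSingularValue A σ1A)
    (hσ1Amax : ∀ σ : ℝ, IsSingularValue A σ → σ ≤ σ1A)
    (hσrA : IsSingularValue A σrA) (hσrApos : 0 < σrA)
    (hσrAmin : ∀ σ : ℝ, IsSingularValue A σ → σ ≠ 0 → σrA ≤ σ)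
    -- P is the orthogonal projection onto the range of A
    (P : (Fin n → ℝ) → (Fin n → ℝ))
    (hPmem : ∀ v : Fin n → ℝ, P v ∈ LinearMap.range A.mulVecLin)
    (hPorth : ∀ v : Fin n → ℝ, ∀ u ∈ LinearMap.range A.mulVecLin, (v - P v) ⬝ᵥ u = 0)
    -- residuals
    (r : ℕ → (Fin n → ℝ))
    (hres : ∀ k : ℕ,
      e2norm (P (r k)) ≤ 2 * ((σ1 - σr) / (σ1 + σr)) ^ k * e2norm (P (r 0))) :
    ∀ k : ℕ,
      e2norm (Aᵀ.mulVec (r k)) ≤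
        2 * (σ1A / σrA) * ((σ1 - σr) / (σ1 + σr)) ^ k * e2norm (Aᵀ.mulVec (r 0)) := by
  obtain ⟨hub, hlb⟩ := sv_bounds A σ1A σrA hσ1A.1 hσ1Amax hσrApos hσrAmin
  have hσ1Apos : 0 < σ1A := lt_of_lt_of_le hσrApos (hσ1Amax _ hσrA)
  have hσ1σr : σr ≤ σ1 := hσ1max σr hσr
  set ρ : ℝ := (σ1 - σr) / (σ1 + σr) with hρdef
  have hρ : 0 ≤ ρ := div_nonneg (by linarith) (by linarith)
  -- Aᵀ kills the component orthogonal to range A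
  have hAeq : ∀ x : Fin n → ℝ, Aᵀ.mulVec x = Aᵀ.mulVec (P x) := by
    intro x
    have h0 : Aᵀ.mulVec (x - P x) = 0 := by
      funext i
      have hu : A.mulVec (Pi.single i 1) ∈ LinearMap.range A.mulVecLin :=
        ⟨Pi.single i 1, rfl⟩
      have horth := hPorth x _ hu
      calc (Aᵀ.mulVec (x - P x)) i
          = (x - P x) ⬝ᵥ A.mulVec (Pi.single i 1) := by
            simp [Matrix.mulVec, dotProduct, Pi.single_apply, mul_comm]
        _ = 0 := horth
    have h1 : Aᵀ.mulVec x - Aᵀ.mulVec (P x) = 0 := by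
      rw [← Matrix.mulVec_sub]; exact h0
    exact sub_eq_zero.mp h1
  intro k
  calc e2norm (Aᵀ.mulVec (r k)) = e2norm (Aᵀ.mulVec (P (r k))) := by rw [hAeq]
    _ ≤ σ1A * e2norm (P (r k)) := hub _
    _ ≤ σ1A * (2 * ρ ^ k * e2norm (P (r 0))) :=
        mul_le_mul_of_nonneg_left (hres k) hσ1Apos.le
    _ ≤ σ1A * (2 * ρ ^ k * (σrA⁻¹ * e2norm (Aᵀ.mulVec (P (r 0))))) := by
        have hl := hlb _ (hPmem (r 0))
        have h2 : e2norm (P (r 0)) ≤ σrA⁻¹ * e2norm (Aᵀ.mulVec (P (r 0))) := by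
          rw [← div_eq_inv_mul, le_div_iff₀ hσrApos, mul_comm]
          exact hl
        have hρk : (0:ℝ) ≤ 2 * ρ ^ k := by positivity
        exact mul_le_mul_of_nonneg_left (mul_le_mul_of_nonneg_left h2 hρk) hσ1Apos.le
    _ = 2 * (σ1A / σrA) * ρ ^ k * e2norm (Aᵀ.mulVec (r 0)) := by
        rw [← hAeq (r 0), div_eq_mul_inv]; ring
end

section
/- If A ∈ R^{n×n} satisfies R(Aᵀ) = R(A), then R(A^k) = R(A) for every positive integer k. -/
open Matrix

theorem EP_range_pow_eq {n : ℕ} (A : Matrix (Fin n) (Fin n) ℝ)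
    (hEP : LinearMap.range Aᵀ.mulVecLin = LinearMap.range A.mulVecLin) :
    ∀ k : ℕ, 0 < k → LinearMap.range (A ^ k).mulVecLin = LinearMap.range A.mulVecLin := by
  -- First: range (A * Aᵀ) = range A
  have hAAT : LinearMap.range (A * Aᵀ).mulVecLin = LinearMap.range A.mulVecLin := by
    apply Submodule.eq_of_le_of_finrank_le
    · rw [mulVecLin_mul]
      exact LinearMap.range_comp_le_range _ _
    · have := Matrix.rank_self_mul_transpose A
      simpa [Matrix.rank] using this.ge
  -- range (A * A) = range A
  have hsq : LinearMap.range (A * A).mulVecLin = LinearMap.range A.mulVecLin := by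
    conv_lhs => rw [mulVecLin_mul, LinearMap.range_comp, ← hEP, ← LinearMap.range_comp,
      ← mulVecLin_mul, hAAT]
  intro k hk
  induction k with
  | zero => exact absurd hk (lt_irrefl 0)
  | succ m ih =>
    rcases Nat.eq_zero_or_pos m with hm | hm
    · subst hm; simp
    · rw [pow_succ', mulVecLin_mul, LinearMap.range_comp, ih hm, ← LinearMap.range_comp,
        ← mulVecLin_mul, hsq]
end
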